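/- Let (M, 𝒜) be an uncertainty matroid on a finite ground set E and let e ∈ E be uncertain. Then e ∈ core if and only if there exists a circuit C of the matroid M'_e such that e ∈ C and C ∩ mid(e) ≠ ∅. -/

import Mathlib

open Matroid

variable {α : Type*}

/-- `A` is an uncertainty area function for `M`: each element of the ground set gets a
nonempty bounded set of reals. -/
def IsAreaFun (M : Matroid α) (A : α → Set ℝ) : Prop :=
  ∀ e ∈ M.E, (A e).Nonempty ∧ BddBelow (A e) ∧ BddAbove (A e)

/-- A realization: a weight function with `w e ∈ A e` for every element of the ground set. -/
def Realization (M : Matroid α) (A : α → Set ℝ) (w : α → ℝ) : Prop :=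
  ∀ e ∈ M.E, w e ∈ A e

/-- The total `w`-weight of a set. -/
noncomputable def setWeight (w : α → ℝ) (T : Set α) : ℝ := ∑ᶠ e ∈ T, w e

/-- A `w`-basis: a basis of `M` of minimum total `w`-weight. -/
def IsMinBasis (M : Matroid α) (w : α → ℝ) (T : Set α) : Prop :=
  M.IsBase T ∧ ∀ B, M.IsBase B → setWeight w T ≤ setWeight w B

/-- A uniformly optimal basis (an `A`-basis): a `w`-basis for every realization `w`. -/
def IsUOB (M : Matroid α) (A : α → Set ℝ) (T : Set α) : Prop :=
  ∀ w, Realization M A w → IsMinBasis M w T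

/-- An element is certain if its area is a singleton. -/
def Certain (A : α → Set ℝ) (e : α) : Prop := ∃ r : ℝ, A e = {r}

/-- `e` is blue if every realization admits a minimum weight basis containing `e`. -/
def Blue (M : Matroid α) (A : α → Set ℝ) (e : α) : Prop :=
  ∀ w, Realization M A w → ∃ T, IsMinBasis M w T ∧ e ∈ T

/-- `e` is red if every realization admits a minimum weight basis avoiding `e`. -/
def Red (M : Matroid α) (A : α → Set ℝ) (e : α) : Prop :=
  ∀ w, Realization M A w → ∃ T, IsMinBasis M w T ∧ e ∉ T

/-- `e` is colored if it is blue or red. -/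
def Colored (M : Matroid α) (A : α → Set ℝ) (e : α) : Prop :=
  Blue M A e ∨ Red M A e

/-- `B` is a revelation of `X` in `(M, A)`: on `X` each area is replaced by a singleton
subset of itself, and outside `X` areas are unchanged. -/
def IsRevelation (M : Matroid α) (A : α → Set ℝ) (X : Set α) (B : α → Set ℝ) : Prop :=
  (∀ e ∈ X, ∃ r ∈ A e, B e = {r}) ∧ ∀ e ∉ X, B e = A e

/-- `F ⊆ E` is a feasible query if every revelation of `F` admits a uniformly optimal basis. -/
def FeasibleQuery (M : Matroid α) (A : α → Set ℝ) (F : Set α) : Prop :=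
  F ⊆ M.E ∧ ∀ B, IsRevelation M A F B → ∃ T, IsUOB M B T

/-- A witness set: a set intersecting every feasible query. -/
def WitnessSet (M : Matroid α) (A : α → Set ℝ) (X : Set α) : Prop :=
  ∀ F, FeasibleQuery M A F → (X ∩ F).Nonempty

/-- The core: elements whose singleton is a witness set. -/
def core (M : Matroid α) (A : α → Set ℝ) : Set α := {e | WitnessSet M A {e}}

/-- Deletion of a set of elements from a matroid. -/
def Matroid.del (M : Matroid α) (D : Set α) : Matroid α := M ↾ (M.E \ D)

/-- Contraction of a set of elements in a matroid, defined by duality. -/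
def Matroid.con (M : Matroid α) (C : Set α) : Matroid α := (M✶.del C)✶

/-- A circuit: a minimal dependent set. -/
def Matroid.IsCircuit' (M : Matroid α) (C : Set α) : Prop :=
  M.Dep C ∧ ∀ D, D ⊂ C → M.Indep D

/-- `low e`: elements of `E - e` whose area lies entirely at or below `L_e`. -/
def lowSet (M : Matroid α) (A : α → Set ℝ) (e : α) : Set α :=
  {f ∈ M.E | f ≠ e ∧ sSup (A f) ≤ sInf (A e)}

/-- `high e`: elements of `E - e` whose area lies entirely at or above `U_e`. -/
def highSet (M : Matroid α) (A : α → Set ℝ) (e : α) : Set α :=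
  {f ∈ M.E | f ≠ e ∧ sSup (A e) ≤ sInf (A f)}

/-- `mid e`: elements of `E - e` whose area meets the open interval `(L_e, U_e)`. -/
def midSet (M : Matroid α) (A : α → Set ℝ) (e : α) : Set α :=
  {f ∈ M.E | f ≠ e ∧ (A f ∩ Set.Ioo (sInf (A e)) (sSup (A e))).Nonempty}

/-- `both e`: elements of `(E - e) \ mid e` whose area meets both `(-∞, L_e]` and `[U_e, ∞)`. -/
def bothSet (M : Matroid α) (A : α → Set ℝ) (e : α) : Set α :=
  {f ∈ M.E | f ≠ e ∧ f ∉ midSet M A e ∧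
    (A f ∩ Set.Iic (sInf (A e))).Nonempty ∧ (A f ∩ Set.Ici (sSup (A e))).Nonempty}

/-- The matroid `M'_e = M / low(e) \ high(e)`. -/
def minorAt (M : Matroid α) (A : α → Set ℝ) (e : α) : Matroid α :=
  (M.con (lowSet M A e)).del (highSet M A e)

/-!
If no circuit of `M'_e` through `e` meets `mid(e)`, querying everything but `e` is feasible. With
all other weights revealed, either some minimum basis contains `e` when `e` weighs `U_e` (and then
it stays minimum for every smaller weight of `e`), or some minimum basis avoids `e` when `e` weighs
`L_e`. If neither held, the cycle criterion would give a circuit through `e` whose other elements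
are lighter than `U_e`, and every circuit through `e` would have an element heavier than `L_e`;
contracting `low(e)` turns the first into a circuit of `M'_e` through `e`, and the second locates
an element of `mid(e)` on it.

Conversely, let `C` be such a circuit and `F` a query missing `e`. Reveal `F` by a realization that
keeps `mid(e)` inside `(L_e, U_e)`, puts `C` below `U_e` and everything else outside `low(e)` at or
above `U_e`. When `e` weighs slightly less than every element of `mid(e)`, it lies in every minimum
basis, since a circuit through `e` of lighter elements would leave, outside `low(e)`, a dependent
proper subset of `C` in `M / low(e)`. When `e` weighs slightly more than the other elements of a
circuit of `M` lifting `C`, it lies in no minimum basis. So no basis is uniformly optimal.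
-/

open Set Function

section Weight

variable {w w' : α → ℝ} {S T : Set α} {e f : α}

lemma setWeight_congr (h : ∀ x ∈ S, w' x = w x) : setWeight w' S = setWeight w S :=
  finsum_mem_congr rfl h

lemma setWeight_eq_add_sdiff (hS : S.Finite) (he : e ∈ S) :
    setWeight w S = w e + setWeight w (S \ {e}) := by
  have h := finsum_mem_insert w (fun h => h.2 rfl) (hS.sdiff (t := {e}))
  rwa [insert_sdiff_singleton, insert_eq_of_mem he] at h

lemma setWeight_eq_add_of_eqOn (hS : S.Finite) (he : e ∈ S) (h : ∀ x ∈ S, x ≠ e → w' x = w x) :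
    setWeight w' S = setWeight w S + (w' e - w e) := by
  rw [setWeight_eq_add_sdiff hS he, setWeight_eq_add_sdiff hS he,
    setWeight_congr fun x hx => h x hx.1 hx.2]
  ring

lemma setWeight_exchange (hT : T.Finite) (he : e ∈ T) (hf : f ∉ T) :
    setWeight w (insert f (T \ {e})) = setWeight w T + w f - w e := by
  rw [setWeight_eq_add_sdiff hT he, setWeight, finsum_mem_insert w (fun h => hf h.1) hT.sdiff,
    setWeight]
  ring

end Weight

namespace Matroid

variable {M : Matroid α} {B C : Set α} {e f : α}

lemma isCircuit'_iff : M.IsCircuit' C ↔ M.IsCircuit C :=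
  isCircuit_iff_forall_ssubset.symm

lemma IsBase.isBase_exchange_of_mem_fundCircuit (hB : M.IsBase B) (heE : e ∈ M.E) (heB : e ∉ B)
    (hf : f ∈ M.fundCircuit e B) (hfe : f ≠ e) : M.IsBase (insert e (B \ {f})) := by
  have hfB : f ∈ B := (M.fundCircuit_subset_insert e B hf).resolve_left hfe
  refine hB.exchange_isBase_of_indep heB ?_
  rw [insert_sdiff_singleton_comm hfe.symm]
  exact (hB.indep.mem_fundCircuit_iff (by rwa [hB.closure_eq]) heB).1 hf

lemma IsBase.exists_isBase_exchange_of_isCircuit (hB : M.IsBase B) (heB : e ∈ B)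
    (hC : M.IsCircuit C) (heC : e ∈ C) : ∃ f ∈ C \ B, M.IsBase (insert f (B \ {e})) := by
  have hnot : ¬ C \ {e} ⊆ M.closure (B \ {e}) := fun h =>
    hB.indep.notMem_closure_sdiff_of_mem heB
      (M.closure_subset_closure_of_subset_closure h (hC.mem_closure_sdiff_singleton_of_mem heC))
  obtain ⟨f, ⟨hfC, hfe⟩, hfcl⟩ := not_subset.1 hnot
  refine ⟨f, ⟨hfC, fun hfB => hfcl (M.subset_closure _ (sdiff_subset.trans hB.subset_ground)
    ⟨hfB, hfe⟩)⟩, hB.exchange_base_of_notMem_closure heB hfcl (hC.subset_ground hfC)⟩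

end Matroid

lemma exists_isMinBasis (M : Matroid α) [M.Finite] (w : α → ℝ) : ∃ T, IsMinBasis M w T := by
  have hfin : {B | M.IsBase B}.Finite :=
    M.ground_finite.finite_subsets.subset fun B hB => hB.subset_ground
  obtain ⟨T, hT, hmin⟩ := exists_min_image _ (setWeight w) hfin M.exists_isBase
  exact ⟨T, hT, hmin⟩

section MinBasis

variable {M : Matroid α} [M.Finite] {w w' : α → ℝ} {T C : Set α} {e f : α}

namespace IsMinBasis

lemma le_of_isBase_exchange (hT : IsMinBasis M w T) (heT : e ∈ T) (hfT : f ∉ T)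
    (hB : M.IsBase (insert f (T \ {e}))) : w e ≤ w f := by
  have := hT.2 _ hB
  rw [setWeight_exchange (M.set_finite T hT.1.subset_ground) heT hfT] at this
  linarith

lemma exchange (hT : IsMinBasis M w T) (heT : e ∈ T) (hfT : f ∉ T)
    (hB : M.IsBase (insert f (T \ {e}))) (hle : w f ≤ w e) :
    IsMinBasis M w (insert f (T \ {e})) := by
  refine ⟨hB, fun B' hB' => le_trans ?_ (hT.2 B' hB')⟩
  rw [setWeight_exchange (M.set_finite T hT.1.subset_ground) heT hfT]
  linarith

lemma mem_of_forall_isCircuit (hT : IsMinBasis M w T) (he : e ∈ M.E)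
    (h : ∀ C, M.IsCircuit C → e ∈ C → ∃ f ∈ C, f ≠ e ∧ w e < w f) : e ∈ T := by
  by_contra heT
  obtain ⟨f, hfC, hfe, hlt⟩ :=
    h _ (hT.1.fundCircuit_isCircuit he heT) (M.mem_fundCircuit e T)
  have hfT : f ∈ T := (M.fundCircuit_subset_insert e T hfC).resolve_left hfe
  exact hlt.not_ge (hT.le_of_isBase_exchange hfT heT
    (hT.1.isBase_exchange_of_mem_fundCircuit he heT hfC hfe))

lemma notMem_of_isCircuit (hT : IsMinBasis M w T) (hC : M.IsCircuit C) (heC : e ∈ C)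
    (h : ∀ f ∈ C, f ≠ e → w f < w e) : e ∉ T := by
  intro heT
  obtain ⟨f, ⟨hfC, hfT⟩, hB⟩ := hT.1.exists_isBase_exchange_of_isCircuit heT hC heC
  exact (h f hfC (ne_of_mem_of_not_mem heT hfT).symm).not_ge
    (hT.le_of_isBase_exchange heT hfT hB)

lemma of_le_of_mem (hT : IsMinBasis M w T) (heT : e ∈ T) (hw : ∀ x ∈ M.E, x ≠ e → w' x = w x)
    (hle : w' e ≤ w e) : IsMinBasis M w' T := by
  have hshift : ∀ S, M.IsBase S → e ∈ S → setWeight w' S = setWeight w S + (w' e - w e) :=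
    fun S hS heS => setWeight_eq_add_of_eqOn (M.set_finite S hS.subset_ground) heS
      fun x hx => hw x (hS.subset_ground hx)
  refine ⟨hT.1, fun B hB => ?_⟩
  have hTB := hT.2 B hB
  by_cases heB : e ∈ B
  · rw [hshift T hT.1 heT, hshift B hB heB]
    linarith
  · rw [hshift T hT.1 heT,
      setWeight_congr fun x hx => hw x (hB.subset_ground hx) (ne_of_mem_of_not_mem hx heB)]
    linarith

lemma of_ge_of_notMem (hT : IsMinBasis M w T) (heT : e ∉ T)
    (hw : ∀ x ∈ M.E, x ≠ e → w' x = w x) (hle : w e ≤ w' e) : IsMinBasis M w' T := by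
  have hcongr : ∀ S, M.IsBase S → e ∉ S → setWeight w' S = setWeight w S :=
    fun S hS heS => setWeight_congr fun x hx =>
      hw x (hS.subset_ground hx) (ne_of_mem_of_not_mem hx heS)
  refine ⟨hT.1, fun B hB => ?_⟩
  have hTB := hT.2 B hB
  by_cases heB : e ∈ B
  · rw [hcongr T hT.1 heT, setWeight_eq_add_of_eqOn (M.set_finite B hB.subset_ground) heB
      fun x hx => hw x (hB.subset_ground hx)]
    linarith
  · rw [hcongr T hT.1 heT, hcongr B hB heB]
    exact hTB

end IsMinBasis

lemma exists_isMinBasis_mem (he : e ∈ M.E)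
    (h : ∀ C, M.IsCircuit C → e ∈ C → ∃ f ∈ C, f ≠ e ∧ w e ≤ w f) :
    ∃ T, IsMinBasis M w T ∧ e ∈ T := by
  obtain ⟨T, hT⟩ := exists_isMinBasis M w
  by_cases heT : e ∈ T
  · exact ⟨T, hT, heT⟩
  obtain ⟨f, hfC, hfe, hle⟩ :=
    h _ (hT.1.fundCircuit_isCircuit he heT) (M.mem_fundCircuit e T)
  have hfT : f ∈ T := (M.fundCircuit_subset_insert e T hfC).resolve_left hfe
  have hB := hT.1.isBase_exchange_of_mem_fundCircuit he heT hfC hfe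
  exact ⟨_, hT.exchange hfT heT hB hle, mem_insert e _⟩

lemma exists_isMinBasis_notMem (hC : M.IsCircuit C) (heC : e ∈ C)
    (h : ∀ f ∈ C, f ≠ e → w f ≤ w e) : ∃ T, IsMinBasis M w T ∧ e ∉ T := by
  obtain ⟨T, hT⟩ := exists_isMinBasis M w
  by_cases heT : e ∈ T
  · obtain ⟨f, ⟨hfC, hfT⟩, hB⟩ := hT.1.exists_isBase_exchange_of_isCircuit heT hC heC
    have hfe : f ≠ e := (ne_of_mem_of_not_mem heT hfT).symm
    exact ⟨_, hT.exchange heT hfT hB (h f hfC hfe), by simp [hfe.symm]⟩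
  · exact ⟨T, hT, heT⟩

end MinBasis

section FiniteBounds

variable {ι : Type*} {A : Set ℝ} {S : Set ι}

lemma exists_mem_forall_lt_of_forall_csInf_lt (hA : A.Nonempty) (hS : S.Finite) (u : ι → ℝ)
    (h : ∀ i ∈ S, sInf A < u i) : ∃ t ∈ A, ∀ i ∈ S, t < u i := by
  rcases S.eq_empty_or_nonempty with rfl | hSne
  · obtain ⟨t, ht⟩ := hA
    exact ⟨t, ht, by simp⟩
  obtain ⟨i₀, hi₀, hmin⟩ := exists_min_image S u hS hSne
  obtain ⟨t, htA, ht⟩ := exists_lt_of_csInf_lt hA (h i₀ hi₀)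
  exact ⟨t, htA, fun i hi => ht.trans_le (hmin i hi)⟩

lemma exists_mem_forall_gt_of_forall_lt_csSup (hA : A.Nonempty) (hS : S.Finite) (u : ι → ℝ)
    (h : ∀ i ∈ S, u i < sSup A) : ∃ t ∈ A, ∀ i ∈ S, u i < t := by
  rcases S.eq_empty_or_nonempty with rfl | hSne
  · obtain ⟨t, ht⟩ := hA
    exact ⟨t, ht, by simp⟩
  obtain ⟨i₀, hi₀, hmax⟩ := exists_max_image S u hS hSne
  obtain ⟨t, htA, ht⟩ := exists_lt_of_lt_csSup hA (h i₀ hi₀)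
  exact ⟨t, htA, fun i hi => (hmax i hi).trans_lt ht⟩

end FiniteBounds

section Uncertainty

variable {M : Matroid α} {A : α → Set ℝ} {C D F S : Set α} {e f g : α} {x : ℝ}

lemma le_sInf_of_mem_lowSet (hA : IsAreaFun M A) (hf : f ∈ lowSet M A e) (hx : x ∈ A f) :
    x ≤ sInf (A e) :=
  (le_csSup (hA f hf.1).2.2 hx).trans hf.2.2

lemma sSup_le_of_mem_highSet (hA : IsAreaFun M A) (hf : f ∈ highSet M A e) (hx : x ∈ A f) :
    sSup (A e) ≤ x :=
  hf.2.2.trans (csInf_le (hA f hf.1).2.1 hx)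

lemma isCircuit'_minorAt_iff :
    (minorAt M A e).IsCircuit' C ↔
      (M ／ lowSet M A e).IsCircuit C ∧ Disjoint C (highSet M A e) :=
  isCircuit'_iff.trans delete_isCircuit_iff

def IsAdversary (M : Matroid α) (A : α → Set ℝ) (e : α) (S : Set α) (v : α → ℝ) : Prop :=
  ∀ f ∈ M.E, f ≠ e → v f ∈ A f ∧
    (f ∈ midSet M A e → v f ∈ Ioo (sInf (A e)) (sSup (A e))) ∧
    (f ∈ S → v f < sSup (A e)) ∧
    (f ∉ midSet M A e → f ∉ S → f ∉ lowSet M A e → sSup (A e) ≤ v f)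

lemma exists_isAdversary (hA : IsAreaFun M A) (hS : Disjoint S (highSet M A e)) :
    ∃ v, IsAdversary M A e S v := by
  have hexists : ∀ f ∈ M.E, f ≠ e → ∃ x ∈ A f,
      (f ∈ midSet M A e → x ∈ Ioo (sInf (A e)) (sSup (A e))) ∧ (f ∈ S → x < sSup (A e)) ∧
      (f ∉ midSet M A e → f ∉ S → f ∉ lowSet M A e → sSup (A e) ≤ x) := by
    intro f hfE hfe
    have hne := (hA f hfE).1
    by_cases hmid : f ∈ midSet M A e
    · obtain ⟨x, hxA, hx⟩ := hmid.2.2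
      exact ⟨x, hxA, fun _ => hx, fun _ => hx.2, fun h => (h hmid).elim⟩
    by_cases hfS : f ∈ S
    · have hlt : sInf (A f) < sSup (A e) :=
        not_le.1 fun h => disjoint_left.1 hS hfS ⟨hfE, hfe, h⟩
      obtain ⟨x, hxA, hx⟩ := exists_lt_of_csInf_lt hne hlt
      exact ⟨x, hxA, fun h => (hmid h).elim, fun _ => hx, fun _ h => (h hfS).elim⟩
    by_cases hlow : f ∈ lowSet M A e
    · obtain ⟨x, hxA⟩ := hne
      exact ⟨x, hxA, fun h => (hmid h).elim, fun h => (hfS h).elim, fun _ _ h => (h hlow).elim⟩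
    obtain ⟨x, hxA, hx⟩ := exists_lt_of_lt_csSup hne (not_le.1 fun h => hlow ⟨hfE, hfe, h⟩)
    exact ⟨x, hxA, fun h => (hmid h).elim, fun h => (hfS h).elim,
      fun _ _ _ => not_lt.1 fun hxU => hmid ⟨hfE, hfe, x, hxA, hx, hxU⟩⟩
  choose! v hv using hexists
  exact ⟨v, hv⟩

lemma FeasibleQuery.exists_forall_isMinBasis_update [DecidableEq α] {v : α → ℝ}
    (hF : FeasibleQuery M A F) (heF : e ∉ F) (hv : ∀ f ∈ M.E, f ≠ e → v f ∈ A f) :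
    ∃ T, ∀ t ∈ A e, IsMinBasis M (update v e t) T := by
  classical
  obtain ⟨T, hT⟩ := hF.2 (fun f => if f ∈ F then {v f} else A f)
    ⟨fun f hf => ⟨v f, hv f (hF.1 hf) (ne_of_mem_of_not_mem hf heF), if_pos hf⟩,
      fun f hf => if_neg hf⟩
  refine ⟨T, fun t ht => hT _ fun f hfE => ?_⟩
  obtain rfl | hfe := eq_or_ne f e
  · simpa [heF] using ht
  · by_cases hfF : f ∈ F <;> simp [hfe, hfF, hv f hfE hfe]

lemma IsAdversary.mem_of_isMinBasis_update [M.Finite] [DecidableEq α] {v : α → ℝ} {T : Set α}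
    {t : ℝ} (hv : IsAdversary M A e C v) (hC : (M ／ lowSet M A e).IsCircuit C) (heC : e ∈ C)
    (hg : g ∈ C ∩ midSet M A e) (ht : ∀ f ∈ midSet M A e, t < v f)
    (hT : IsMinBasis M (update v e t) T) : e ∈ T := by
  have helow : e ∉ lowSet M A e := fun h => h.2.1 rfl
  refine hT.mem_of_forall_isCircuit (hC.subset_ground heC).1 fun C' hC' heC' => ?_
  by_contra! hC'le
  have hsub : C' \ lowSet M A e ⊆ C \ {g} := by
    rintro x ⟨hxC', hxlow⟩
    obtain rfl | hxe := eq_or_ne x e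
    · exact ⟨heC, hg.2.2.1.symm⟩
    have hvx : v x ≤ t := by simpa [hxe] using hC'le x hxC' hxe
    have hxmid : x ∉ midSet M A e := fun hm => (ht x hm).not_ge hvx
    have hxU : v x < sSup (A e) :=
      hvx.trans_lt ((ht g hg.2).trans ((hv g hg.2.1 hg.2.2.1).2.1 hg.2).2)
    have hxC : x ∈ C := by
      by_contra hxC
      exact hxU.not_ge ((hv x (hC'.subset_ground hxC') hxe).2.2.2 hxmid hxC hxlow)
    exact ⟨hxC, fun h => hxmid ((mem_singleton_iff.1 h) ▸ hg.2)⟩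
  have hdep := hC'.contract_dep_of_not_subset (C := lowSet M A e) fun h => helow (h heC')
  exact hdep.not_indep (hC.ssubset_indep (hsub.trans_ssubset (sdiff_singleton_ssubset.2 hg.1)))

lemma exists_isCircuit'_minorAt {r : α → ℝ} (hA : IsAreaFun M A)
    (hr : ∀ f ∈ M.E, f ≠ e → r f ∈ A f) (hD : M.IsCircuit D) (heD : e ∈ D)
    (hDU : ∀ f ∈ D, f ≠ e → r f < sSup (A e))
    (hL : ∀ C, M.IsCircuit C → e ∈ C → ∃ f ∈ C, f ≠ e ∧ sInf (A e) < r f) :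
    ∃ C, (minorAt M A e).IsCircuit' C ∧ e ∈ C ∧ (C ∩ midSet M A e).Nonempty := by
  have helow : e ∉ lowSet M A e := fun h => h.2.1 rfl
  have hecl : e ∈ (M ／ lowSet M A e).closure ((D \ {e}) \ lowSet M A e) := by
    rw [contract_closure_eq, sdiff_union_self]
    exact ⟨M.closure_subset_closure subset_union_left (hD.mem_closure_sdiff_singleton_of_mem heD),
      helow⟩
  obtain ⟨C, hCD, hC, heC⟩ := exists_isCircuit_of_mem_closure hecl fun h => h.1.2 rfl
  obtain ⟨D', hD', hCD', hD'C⟩ := hC.exists_subset_isCircuit_of_contract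
  obtain ⟨f, hfD', hfe, hLf⟩ := hL D' hD' (hCD' heC)
  have hfE : f ∈ M.E := hD'.subset_ground hfD'
  have hfC : f ∈ C := (hD'C hfD').resolve_right fun hflow =>
    hLf.not_ge (le_sInf_of_mem_lowSet hA hflow (hr f hfE hfe))
  have hfU : r f < sSup (A e) := hDU f ((hCD hfC).resolve_left hfe).1.1 hfe
  refine ⟨C, isCircuit'_minorAt_iff.2 ⟨hC, disjoint_left.2 fun x hxC hxhigh => ?_⟩, heC,
    f, hfC, hfE, hfe, r f, hr f hfE hfe, hLf, hfU⟩
  obtain rfl | hx := hCD hxC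
  · exact hxhigh.2.1 rfl
  · exact (hDU x hx.1.1 hx.1.2).not_ge
      (sSup_le_of_mem_highSet hA hxhigh (hr x hxhigh.1 hxhigh.2.1))

lemma feasibleQuery_ground_sdiff_singleton [M.Finite] (hA : IsAreaFun M A) (he : e ∈ M.E)
    (hno : ¬ ∃ C, (minorAt M A e).IsCircuit' C ∧ e ∈ C ∧ (C ∩ midSet M A e).Nonempty) :
    FeasibleQuery M A (M.E \ {e}) := by
  classical
  refine ⟨sdiff_subset, fun B hB => ?_⟩
  choose! r hrA hrB using hB.1
  have hreal : ∀ w, Realization M B w →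
      (∀ f ∈ M.E, f ≠ e → w f = r f) ∧ w e ∈ A e := fun w hw =>
    ⟨fun f hfE hfe => by simpa [hrB f ⟨hfE, hfe⟩] using hw f hfE,
      hB.2 e (fun h => h.2 rfl) ▸ hw e he⟩
  by_cases hU : ∀ C, M.IsCircuit C → e ∈ C → ∃ f ∈ C, f ≠ e ∧ sSup (A e) ≤ r f
  · obtain ⟨T, hT, heT⟩ := exists_isMinBasis_mem (w := update r e (sSup (A e))) he
      fun C hC heC => by
        obtain ⟨f, hfC, hfe, hUf⟩ := hU C hC heC
        exact ⟨f, hfC, hfe, by simpa [hfe] using hUf⟩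
    refine ⟨T, fun w hw => hT.of_le_of_mem heT (fun f hfE hfe => ?_) ?_⟩
    · rw [update_of_ne hfe, (hreal w hw).1 f hfE hfe]
    · simpa using le_csSup (hA e he).2.2 (hreal w hw).2
  by_cases hL : ∃ C, M.IsCircuit C ∧ e ∈ C ∧ ∀ f ∈ C, f ≠ e → r f ≤ sInf (A e)
  · obtain ⟨C, hC, heC, hCL⟩ := hL
    obtain ⟨T, hT, heT⟩ := exists_isMinBasis_notMem (w := update r e (sInf (A e))) hC heC
      fun f hf hfe => by simpa [hfe] using hCL f hf hfe
    refine ⟨T, fun w hw => hT.of_ge_of_notMem heT (fun f hfE hfe => ?_) ?_⟩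
    · rw [update_of_ne hfe, (hreal w hw).1 f hfE hfe]
    · simpa using csInf_le (hA e he).2.1 (hreal w hw).2
  push Not at hU hL
  obtain ⟨D, hD, heD, hDU⟩ := hU
  exact (hno (exists_isCircuit'_minorAt hA (fun f hf hfe => hrA f ⟨hf, hfe⟩) hD heD hDU hL)).elim

lemma mem_of_feasibleQuery [M.Finite] (hA : IsAreaFun M A)
    (hC : (minorAt M A e).IsCircuit' C) (heC : e ∈ C) (hg : g ∈ C ∩ midSet M A e)
    (hF : FeasibleQuery M A F) : e ∈ F := by
  classical
  by_contra heF
  obtain ⟨hCc, hChigh⟩ := isCircuit'_minorAt_iff.1 hC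
  have heE : e ∈ M.E := (hCc.subset_ground heC).1
  have hLU : sInf (A e) < sSup (A e) := by
    obtain ⟨-, -, x, -, hx⟩ := hg.2
    exact hx.1.trans hx.2
  obtain ⟨v, hv⟩ := exists_isAdversary hA hChigh
  obtain ⟨T, hT⟩ := hF.exists_forall_isMinBasis_update heF fun f hf hfe => (hv f hf hfe).1
  obtain ⟨t₁, ht₁, ht₁v⟩ := exists_mem_forall_lt_of_forall_csInf_lt (hA e heE).1
    (M.set_finite (midSet M A e) fun f hf => hf.1) v fun f hf => ((hv f hf.1 hf.2.1).2.1 hf).1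
  obtain ⟨D, hD, hCD, hDC⟩ := hCc.exists_subset_isCircuit_of_contract
  have hDU : ∀ f ∈ D \ {e}, v f < sSup (A e) := by
    rintro f ⟨hfD, hfe⟩
    have hfE : f ∈ M.E := hD.subset_ground hfD
    rcases hDC hfD with hfC | hflow
    · exact (hv f hfE hfe).2.2.1 hfC
    · exact (le_sInf_of_mem_lowSet hA hflow (hv f hfE hfe).1).trans_lt hLU
  obtain ⟨t₂, ht₂, ht₂v⟩ := exists_mem_forall_gt_of_forall_lt_csSup (hA e heE).1
    (M.set_finite (D \ {e}) (sdiff_subset.trans hD.subset_ground)) v hDU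
  exact (hT t₂ ht₂).notMem_of_isCircuit hD (hCD heC)
    (fun f hf hfe => by simpa [hfe] using ht₂v f ⟨hf, hfe⟩)
    (hv.mem_of_isMinBasis_update hCc heC hg ht₁v (hT t₁ ht₁))

end Uncertainty

theorem mem_core_iff_general (M : Matroid α) (A : α → Set ℝ)
    (hE : M.E.Finite) (hA : IsAreaFun M A)
    (e : α) (he : e ∈ M.E) :
    e ∈ core M A ↔
      ∃ C, (minorAt M A e).IsCircuit' C ∧ e ∈ C ∧ (C ∩ midSet M A e).Nonempty := by
  have : M.Finite := ⟨hE⟩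
  constructor
  · intro hcore
    by_contra hno
    obtain ⟨x, rfl, hx⟩ := hcore _ (feasibleQuery_ground_sdiff_singleton hA he hno)
    exact hx.2 rfl
  · rintro ⟨C, hC, heC, g, hg⟩ F hF
    exact ⟨e, rfl, mem_of_feasibleQuery hA hC heC hg hF⟩

/-- Characterization of the core via circuits of `M'_e` meeting `mid(e)`. -/
theorem mem_core_iff (M : Matroid α) (A : α → Set ℝ)
    (hE : M.E.Finite) (hA : IsAreaFun M A)
    (e : α) (he : e ∈ M.E) (hu : ¬ Certain A e) :
    e ∈ core M A ↔
      ∃ C, (minorAt M A e).IsCircuit' C ∧ e ∈ C ∧ (C ∩ midSet M A e).Nonempty :=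
  mem_core_iff_general M A hE hA e he
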